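/- arXiv:1311.0116 — 2 statements merged into one kernel-verified Lean document; each statement's English description precedes it below -/
import Mathlib

section
/- Let L_k be the Laplacian of a connected graph on n vertices, K^I diagonal with positive entries, D and K^P diagonal matrices, and p^m ∈ ℝ^n, ω_ref ∈ ℝ arbitrary. Then the equation L_k δ - k K^I 1 = -p^m + (D+K^P) 1 ω_ref has a solution (δ, k) ∈ ℝ^n × ℝ. -/
/-!
Since `L` is symmetric, its range is the orthogonal complement of its kernel, and the kernel
consists of constant vectors. So `L δ = b + k Kᴵ 1` is solvable as soon as the entries of
`b + k Kᴵ 1` sum to zero, and `k` can be chosen that way because `1ᵀ Kᴵ 1 = tr Kᴵ > 0`.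
-/

open Matrix

theorem Matrix.IsHermitian.exists_mulVec_eq {𝕜 ι : Type*} [RCLike 𝕜] [Fintype ι]
    {A : Matrix ι ι 𝕜} (hA : A.IsHermitian) {y : ι → 𝕜}
    (hy : ∀ x, A *ᵥ x = 0 → y ⬝ᵥ star x = 0) : ∃ x, A *ᵥ x = y := by
  classical
  have hT : A.toEuclideanLin.IsSymmetric := isSymmetric_toEuclideanLin_iff.mpr hA
  have hrange : LinearMap.range A.toEuclideanLin = (LinearMap.ker A.toEuclideanLin)ᗮ := by
    rw [← hT.orthogonal_range, Submodule.orthogonal_orthogonal]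
  have hmem : WithLp.toLp 2 y ∈ LinearMap.range A.toEuclideanLin := by
    rw [hrange, Submodule.mem_orthogonal]
    intro u hu
    exact hy u.ofLp (congrArg WithLp.ofLp hu)
  obtain ⟨x, hx⟩ := hmem
  exact ⟨x.ofLp, congrArg WithLp.ofLp hx⟩

theorem Matrix.IsDiag.dotProduct_mulVec_one_pos {ι : Type*} [Fintype ι] [Nonempty ι]
    {A : Matrix ι ι ℝ} (hA : A.IsDiag) (hpos : ∀ i, 0 < A i i) :
    0 < (fun _ => (1 : ℝ)) ⬝ᵥ A *ᵥ (fun _ => 1) := by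
  classical
  rw [← hA.diagonal_diag]
  simp only [dotProduct, mulVec_diagonal, diag_apply, one_mul, mul_one]
  exact Finset.sum_pos (fun i _ => hpos i) Finset.univ_nonempty

theorem stmt3_general (n : ℕ) (L KI D KP : Matrix (Fin n) (Fin n) ℝ)
    (hL : L.PosSemidef)
    (hker : ∀ x : Fin n → ℝ, L *ᵥ x = 0 → ∃ c : ℝ, x = fun _ => c)
    (hKI : KI.IsDiag) (hKIpos : ∀ i, 0 < KI i i)
    (pm : Fin n → ℝ) (ωref : ℝ) :
    ∃ (δ : Fin n → ℝ) (k : ℝ),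
      L *ᵥ δ - k • (KI *ᵥ (fun _ => (1 : ℝ))) =
        -pm + ωref • ((D + KP) *ᵥ (fun _ => (1 : ℝ))) := by
  set one : Fin n → ℝ := fun _ => 1
  set b := -pm + ωref • ((D + KP) *ᵥ one)
  cases isEmpty_or_nonempty (Fin n)
  · exact ⟨0, 0, Subsingleton.elim _ _⟩
  have hw : 0 < one ⬝ᵥ KI *ᵥ one := hKI.dotProduct_mulVec_one_pos hKIpos
  set k := -(one ⬝ᵥ b) / (one ⬝ᵥ KI *ᵥ one) with hk
  have horth : one ⬝ᵥ (b + k • KI *ᵥ one) = 0 := by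
    rw [dotProduct_add, dotProduct_smul, smul_eq_mul, hk, div_mul_cancel₀ _ hw.ne',
      add_neg_cancel]
  obtain ⟨δ, hδ⟩ : ∃ δ, L *ᵥ δ = b + k • KI *ᵥ one := by
    refine hL.isHermitian.exists_mulVec_eq fun x hx => ?_
    obtain ⟨c, rfl⟩ := hker x hx
    rw [star_trivial, show (fun _ => c) = c • one by ext; simp [one], dotProduct_smul,
      dotProduct_comm, horth, smul_zero]
  exact ⟨δ, k, by rw [hδ, add_sub_cancel_right]⟩

/-- The equation `L δ - k Kᴵ 1 = -pᵐ + (D + Kᴾ) 1 ω_ref` has a solution `(δ, k)`. -/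
theorem stmt3 (n : ℕ) (L KI D KP : Matrix (Fin n) (Fin n) ℝ)
    (hL : L.PosSemidef)
    (hL1 : L *ᵥ (fun _ => (1 : ℝ)) = 0)
    (hker : ∀ x : Fin n → ℝ, L *ᵥ x = 0 → ∃ c : ℝ, x = fun _ => c)
    (hKI : KI.IsDiag) (hKIpos : ∀ i, 0 < KI i i)
    (hD : D.IsDiag) (hKP : KP.IsDiag)
    (pm : Fin n → ℝ) (ωref : ℝ) :
    ∃ (δ : Fin n → ℝ) (k : ℝ),
      L *ᵥ δ - k • (KI *ᵥ (fun _ => (1 : ℝ))) =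
        -pm + ωref • ((D + KP) *ᵥ (fun _ => (1 : ℝ))) :=
  stmt3_general n L KI D KP hL hker hKI hKIpos pm ωref
end

section
/- Let F ∈ ℝ^{N×N}, C ∈ ℝ^{m×N}, and suppose every eigenvalue λ of F with Re(λ) ≥ 0 has its generalized eigenspace contained in the unobservable subspace of (F, C) (i.e., in ker of the observability matrix). If ẋ = Fx + b for a constant vector b, and the system has an equilibrium x* with Fx* + b = 0, then for every solution x(t), the output y(t) = Cx(t) converges to Cx* as t → ∞. -/
/-!
Shifting by the equilibrium reduces the claim to the linear system `ż = F z`, which we complexify.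
Every initial state is a sum of generalized eigenvectors, and from a generalized eigenvector `v`
for `μ` the solution is `e^{tμ} ∑_{k<N} tᵏ/k! (F - μ)ᵏ v`. If `Re μ < 0` its output decays;
otherwise `v` is unobservable, hence so is every `(F - μ)ᵏ v`, and its output vanishes. Since
solutions of a linear ODE are determined by their initial value, the given solution is the
superposition of these modes.
-/

open Matrix Filter
open Finset Topology

section GeneralizedModes

variable {n p : Type*} [Fintype n] [DecidableEq n]

lemma hasDerivAt_ofReal_pow_succ_div_factorial (k : ℕ) (t : ℝ) :
    HasDerivAt (fun s : ℝ => (s : ℂ) ^ (k + 1) / (k + 1).factorial)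
      ((t : ℂ) ^ k / k.factorial) t := by
  convert ((hasDerivAt_pow (k + 1) (t : ℂ)).div_const ((k + 1).factorial : ℂ)).comp_ofReal
    using 1
  rw [Nat.factorial_succ]
  push_cast
  field_simp

lemma hasDerivAt_sum_pow_div_factorial_smul {E : Type*} [NormedAddCommGroup E]
    [NormedSpace ℂ E] (u : ℕ → E) {d : ℕ} (hd : u d = 0) (t : ℝ) :
    HasDerivAt (fun s : ℝ => ∑ k ∈ range d, ((s : ℂ) ^ k / k.factorial) • u k)
      (∑ k ∈ range d, ((t : ℂ) ^ k / k.factorial) • u (k + 1)) t := by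
  rcases d with _ | d
  · simpa using hasDerivAt_const t (0 : E)
  have hsplit : (fun s : ℝ => ∑ k ∈ range (d + 1), ((s : ℂ) ^ k / k.factorial) • u k) =
      fun s : ℝ => ∑ k ∈ range d, ((s : ℂ) ^ (k + 1) / (k + 1).factorial) • u (k + 1) + u 0 := by
    funext s
    simp [sum_range_succ']
  rw [hsplit, sum_range_succ, hd, smul_zero, add_zero]
  refine (HasDerivAt.fun_sum fun k _ => ?_).add_const _
  exact (hasDerivAt_ofReal_pow_succ_div_factorial k t).smul_const _

noncomputable def genMode (A : Matrix n n ℂ) (μ : ℂ) (d : ℕ) (v : n → ℂ) (t : ℝ) : n → ℂ :=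
  Complex.exp (t * μ) • ∑ k ∈ range d, ((t : ℂ) ^ k / k.factorial) • ((A - μ • 1) ^ k *ᵥ v)

variable {A : Matrix n n ℂ} {μ : ℂ} {d : ℕ} {v : n → ℂ}

lemma genMode_zero (hv : (A - μ • 1) ^ d *ᵥ v = 0) : genMode A μ d v 0 = v := by
  rcases d with _ | d
  · simpa [genMode, eq_comm] using hv
  · simp [genMode, sum_range_succ']

lemma hasDerivAt_genMode (hv : (A - μ • 1) ^ d *ᵥ v = 0) (t : ℝ) :
    HasDerivAt (genMode A μ d v) (A *ᵥ genMode A μ d v t) t := by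
  set B := A - μ • 1
  set g : ℝ → n → ℂ := fun s => ∑ k ∈ range d, ((s : ℂ) ^ k / k.factorial) • (B ^ k *ᵥ v)
  have hg : HasDerivAt g (B *ᵥ g t) t := by
    refine (hasDerivAt_sum_pow_div_factorial_smul (fun k => B ^ k *ᵥ v) hv t).congr_deriv ?_
    simp only [g, mulVec_sum, mulVec_smul, mulVec_mulVec, ← pow_succ']
  have hexp : HasDerivAt (fun s : ℝ => Complex.exp (s * μ)) (Complex.exp (t * μ) * μ) t := by
    simpa using (((hasDerivAt_id (t : ℂ)).mul_const μ).cexp).comp_ofReal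
  refine (hexp.smul hg).congr_deriv ?_
  simp only [genMode, mulVec_smul, B, sub_mulVec, smul_mulVec, one_mulVec]
  rw [mul_smul, ← smul_add, sub_add_cancel]

lemma mulVec_genMode (C : Matrix p n ℂ) (t : ℝ) :
    C *ᵥ genMode A μ d v t = ∑ k ∈ range d, (Complex.exp (t * μ) * (t : ℂ) ^ k) •
      ((k.factorial : ℂ)⁻¹ • (C *ᵥ ((A - μ • 1) ^ k *ᵥ v))) := by
  simp only [genMode, mulVec_smul, mulVec_sum, smul_sum, smul_smul]
  refine sum_congr rfl fun k _ => ?_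
  ring_nf

lemma mulVec_genMode_eq_zero {C : Matrix p n ℂ}
    (hC : ∀ k < d, C *ᵥ ((A - μ • 1) ^ k *ᵥ v) = 0) (t : ℝ) : C *ᵥ genMode A μ d v t = 0 := by
  rw [mulVec_genMode]
  exact sum_eq_zero fun k hk => by rw [hC k (mem_range.mp hk), smul_zero, smul_zero]

lemma tendsto_cexp_mul_mul_pow_atTop {μ : ℂ} (hμ : μ.re < 0) (k : ℕ) :
    Tendsto (fun t : ℝ => Complex.exp (t * μ) * (t : ℂ) ^ k) atTop (𝓝 0) := by
  refine squeeze_zero_norm' ?_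
    (tendsto_rpow_mul_exp_neg_mul_atTop_nhds_zero k (-μ.re) (neg_pos.mpr hμ))
  filter_upwards [eventually_ge_atTop 0] with t ht
  rw [norm_mul, norm_pow, Complex.norm_exp, Complex.norm_of_nonneg ht, Real.rpow_natCast]
  simp [mul_comm]

lemma tendsto_mulVec_genMode (C : Matrix p n ℂ) (hμ : μ.re < 0) :
    Tendsto (fun t => C *ᵥ genMode A μ d v t) atTop (𝓝 0) := by
  simp_rw [mulVec_genMode]
  simpa using tendsto_finsetSum (range d) fun k _ =>
    (tendsto_cexp_mul_mul_pow_atTop hμ k).smul_const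
      ((k.factorial : ℂ)⁻¹ • (C *ᵥ ((A - μ • 1) ^ k *ᵥ v)))

end GeneralizedModes

section OutputDecay

variable {n p : Type*} [Fintype n] {A : Matrix n n ℂ} {C : Matrix p n ℂ}

lemma eq_of_hasDerivAt_mulVec {z w : ℝ → n → ℂ} (hz : ∀ t, HasDerivAt z (A *ᵥ z t) t)
    (hw : ∀ t, HasDerivAt w (A *ᵥ w t) t) (h0 : z 0 = w 0) : z = w :=
  ODE_solution_unique_univ (v := fun _ y => A *ᵥ y) (s := fun _ => Set.univ)
    (fun _ => (LinearMap.toContinuousLinearMap (mulVecLin A)).lipschitz.lipschitzOnWith)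
    (fun t => ⟨hz t, trivial⟩) (fun t => ⟨hw t, trivial⟩) h0

variable (A C) in
def outputDecaySubmodule : Submodule ℂ (n → ℂ) where
  carrier := {v | ∃ w : ℝ → n → ℂ, w 0 = v ∧ (∀ t, HasDerivAt w (A *ᵥ w t) t) ∧
    Tendsto (fun t => C *ᵥ w t) atTop (𝓝 0)}
  zero_mem' := ⟨0, rfl, fun t => by simp, by simp⟩
  add_mem' := by
    rintro _ _ ⟨w₁, rfl, hw₁, hC₁⟩ ⟨w₂, rfl, hw₂, hC₂⟩
    refine ⟨w₁ + w₂, rfl, fun t => ?_, ?_⟩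
    · simpa only [Pi.add_apply, mulVec_add] using (hw₁ t).add (hw₂ t)
    · simpa only [Pi.add_apply, mulVec_add, add_zero] using hC₁.add hC₂
  smul_mem' := by
    rintro c _ ⟨w, rfl, hw, hC⟩
    refine ⟨c • w, rfl, fun t => ?_, ?_⟩
    · simpa only [Pi.smul_apply, mulVec_smul] using (hw t).const_smul c
    · simpa only [Pi.smul_apply, mulVec_smul, smul_zero] using hC.const_smul c

variable [DecidableEq n]

variable (A C) in
def OutputStable : Prop :=
  ∀ μ : ℂ, 0 ≤ μ.re → ∀ v : n → ℂ, (A - μ • 1) ^ Fintype.card n *ᵥ v = 0 →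
    ∀ j < Fintype.card n, C *ᵥ (A ^ j *ᵥ v) = 0

lemma mulVec_sub_smul_one_pow_mulVec_eq_zero {d : ℕ} {v : n → ℂ}
    (hv : ∀ j < d, C *ᵥ (A ^ j *ᵥ v) = 0) (μ : ℂ) :
    ∀ k < d, C *ᵥ ((A - μ • 1) ^ k *ᵥ v) = 0 := by
  suffices h : ∀ k j, j + k < d → C *ᵥ ((A - μ • 1) ^ k *ᵥ (A ^ j *ᵥ v)) = 0 from
    fun k hk => by simpa using h k 0 (by omega)
  intro k
  induction k with
  | zero => intro j hj; simpa using hv j hj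
  | succ k ih =>
    intro j hj
    have hstep : (A - μ • 1) ^ (k + 1) *ᵥ (A ^ j *ᵥ v) =
        (A - μ • 1) ^ k *ᵥ (A ^ (j + 1) *ᵥ v) - μ • ((A - μ • 1) ^ k *ᵥ (A ^ j *ᵥ v)) := by
      rw [pow_succ, ← mulVec_mulVec, sub_mulVec, smul_mulVec, one_mulVec, mulVec_mulVec,
        ← pow_succ', mulVec_sub, mulVec_smul]
    rw [hstep, mulVec_sub, mulVec_smul, ih (j + 1) (by omega), ih j (by omega), smul_zero,
      sub_zero]

lemma pow_card_mulVec_eq_zero_of_mem_maxGenEigenspace {μ : ℂ} {v : n → ℂ}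
    (hv : v ∈ Module.End.maxGenEigenspace (toLinAlgEquiv' A) μ) :
    (A - μ • 1) ^ Fintype.card n *ᵥ v = 0 := by
  rw [Module.End.maxGenEigenspace_eq_genEigenspace_finrank, Module.finrank_fintype_fun_eq_card,
    Module.End.mem_genEigenspace_nat, LinearMap.mem_ker] at hv
  rwa [← toLinAlgEquiv'_apply, map_pow, map_sub, map_smul, map_one]

lemma outputDecaySubmodule_eq_top (hobs : OutputStable A C) : outputDecaySubmodule A C = ⊤ := by
  rw [eq_top_iff, ← Module.End.iSup_maxGenEigenspace_eq_top (toLinAlgEquiv' A), iSup_le_iff]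
  intro μ v hv
  replace hv := pow_card_mulVec_eq_zero_of_mem_maxGenEigenspace hv
  refine ⟨genMode A μ _ v, genMode_zero hv, hasDerivAt_genMode hv, ?_⟩
  rcases lt_or_ge μ.re 0 with hμ | hμ
  · exact tendsto_mulVec_genMode C hμ
  · have hker := mulVec_sub_smul_one_pow_mulVec_eq_zero (hobs μ hμ v hv) μ
    simp only [mulVec_genMode_eq_zero hker]
    exact tendsto_const_nhds

theorem tendsto_mulVec_of_hasDerivAt_mulVec (hobs : OutputStable A C)
    {z : ℝ → n → ℂ} (hz : ∀ t, HasDerivAt z (A *ᵥ z t) t) :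
    Tendsto (fun t => C *ᵥ z t) atTop (𝓝 0) := by
  obtain ⟨w, hw0, hw, hC⟩ : z 0 ∈ outputDecaySubmodule A C := by
    rw [outputDecaySubmodule_eq_top hobs]; trivial
  rwa [eq_of_hasDerivAt_mulVec hz hw hw0.symm]

end OutputDecay

section Complexification

variable {n p : Type*}

lemma HasDerivAt.pi_ofReal_comp {z : ℝ → n → ℝ} {z' : n → ℝ} {t : ℝ} (hz : HasDerivAt z z' t) :
    HasDerivAt (fun s i => (z s i : ℂ)) (fun i => (z' i : ℂ)) t :=
  hasDerivAt_pi.mpr fun i => (hasDerivAt_pi.mp hz i).ofReal_comp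

lemma tendsto_pi_ofReal_nhds_zero {α : Type*} {l : Filter α} {y : α → p → ℝ}
    (hy : Tendsto (fun t i => (y t i : ℂ)) l (𝓝 0)) : Tendsto y l (𝓝 0) := by
  have hre : Continuous fun w : p → ℂ => fun i => (w i).re :=
    continuous_pi fun i => Complex.continuous_re.comp (continuous_apply i)
  have h := (hre.tendsto 0).comp hy
  simp only [Function.comp_def, Complex.ofReal_re] at h
  exact h

variable [Fintype n]

lemma map_ofReal_mulVec (M : Matrix p n ℝ) (v : n → ℝ) :
    M.map Complex.ofReal *ᵥ (fun i => (v i : ℂ)) = fun i => ((M *ᵥ v) i : ℂ) :=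
  funext fun i => (RingHom.map_mulVec Complex.ofRealHom M v i).symm

variable [DecidableEq n]

theorem tendsto_mulVec_of_hasDerivAt_mulVec_real {F : Matrix n n ℝ} {C : Matrix p n ℝ}
    (hobs : OutputStable (F.map Complex.ofReal) (C.map Complex.ofReal))
    {z : ℝ → n → ℝ} (hz : ∀ t, HasDerivAt z (F *ᵥ z t) t) :
    Tendsto (fun t => C *ᵥ z t) atTop (𝓝 0) := by
  have hzc (t : ℝ) : HasDerivAt (fun s i => (z s i : ℂ))
      (F.map Complex.ofReal *ᵥ fun i => (z t i : ℂ)) t := by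
    rw [map_ofReal_mulVec]
    exact (hz t).pi_ofReal_comp
  refine tendsto_pi_ofReal_nhds_zero ?_
  exact (tendsto_mulVec_of_hasDerivAt_mulVec hobs hzc).congr fun t => map_ofReal_mulVec C (z t)

end Complexification

/-- If every eigenvalue of `F` with nonnegative real part has its generalized
eigenspace contained in the unobservable subspace of `(F, C)`, then for the affine system
`ẋ = Fx + b` with equilibrium `x*` (`Fx* + b = 0`), the output `y(t) = Cx(t)` of every
solution converges to `Cx*`. -/
theorem stmt17 (N m : ℕ) (F : Matrix (Fin N) (Fin N) ℝ) (C : Matrix (Fin m) (Fin N) ℝ)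
    (hobs : ∀ lam : ℂ, 0 ≤ lam.re →
      ∀ v : Fin N → ℂ, ((F.map Complex.ofReal - lam • 1) ^ N) *ᵥ v = 0 →
        ∀ k : Fin N, ((C.map Complex.ofReal) * (F.map Complex.ofReal) ^ (k : ℕ)) *ᵥ v = 0)
    (b : Fin N → ℝ) (xstar : Fin N → ℝ) (hstar : F *ᵥ xstar + b = 0)
    (x : ℝ → Fin N → ℝ) (hx : ∀ t : ℝ, HasDerivAt x (F *ᵥ x t + b) t) :
    Tendsto (fun t => C *ᵥ x t) atTop (nhds (C *ᵥ xstar)) := by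
  have hdev (t : ℝ) : HasDerivAt (fun s => x s - xstar) (F *ᵥ (x t - xstar)) t := by
    rw [mulVec_sub, eq_neg_of_add_eq_zero_left hstar, sub_neg_eq_add]
    exact (hx t).sub_const xstar
  have hstable : OutputStable (F.map Complex.ofReal) (C.map Complex.ofReal) := by
    intro μ hμ v hv j hj
    rw [Fintype.card_fin] at hv hj
    rw [mulVec_mulVec]
    exact hobs μ hμ v hv ⟨j, hj⟩
  simpa only [mulVec_sub, tendsto_sub_nhds_zero_iff] using
    tendsto_mulVec_of_hasDerivAt_mulVec_real hstable hdev
end
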